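/- arXiv:2109.12978 — 3 statements merged into one kernel-verified Lean document; each statement's English description precedes it below -/
import Mathlib

section
/- For natural numbers k and l, the integral ∫_{-π}^{π} cos(kx) (cos x)^l dx equals (2π/2^{l-k}) · C(l-k, (l-k)/2) · ∏_{i=0}^{k-1} (l-i)/(l+k-2i) when l ≥ k and l ≡ k (mod 2), and equals 0 otherwise. -/
/-!
Expanding `cos x = (e^{ix} + e^{-ix}) / 2` binomially gives
`e^{ikx} cos^l x = 2^{-l} ∑ⱼ C(l, j) e^{i(2j - l + k)x}`, and by orthogonality of the characters
`e^{inx}` on `[-π, π]` only the term with `2j = l - k` survives, so the integral is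
`2π C(l, (l - k)/2) / 2^l`; the cosine integral is its real part. For `l = k + 2m` the product
form of the statement comes from `C(k + 2m, m) (k + m)^{(k)} = C(2m, m) (k + 2m)^{(k)}`, where
`n^{(k)}` is the falling factorial.
-/

open Complex Finset

theorem integral_exp_int_mul_I (n : ℤ) :
    ∫ x : ℝ in (-Real.pi)..Real.pi, exp (n * x * I) =
      if n = 0 then 2 * (Real.pi : ℂ) else 0 := by
  split_ifs with hn
  · simp [hn, two_mul]
  · have hc : (n : ℂ) * I ≠ 0 := by simp [hn, I_ne_zero]
    simp_rw [mul_right_comm _ _ I]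
    rw [integral_exp_mul_complex hc]
    have hper : exp (n * I * Real.pi) = exp (n * I * ((-Real.pi : ℝ) : ℂ)) := by
      rw [exp_eq_exp_iff_exists_int]
      exact ⟨n, by push_cast; ring⟩
    rw [hper, sub_self, zero_div]

theorem cos_pow_mul_two_pow (l : ℕ) (y : ℂ) :
    cos y ^ l * 2 ^ l =
      ∑ j ∈ range (l + 1), (l.choose j : ℂ) * exp (((2 * j - l : ℤ) : ℂ) * y * I) := by
  rw [cos, div_pow, div_mul_cancel₀ _ (by norm_num), add_pow]
  refine sum_congr rfl fun j hj => ?_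
  have hjl : j ≤ l := Nat.lt_succ_iff.mp (mem_range.mp hj)
  rw [← exp_nat_mul, ← exp_nat_mul, ← exp_add, mul_comm]
  congr 2
  push_cast [hjl]
  ring

theorem integral_exp_mul_cos_pow (k l : ℕ) :
    ∫ x : ℝ in (-Real.pi)..Real.pi, exp (k * x * I) * cos x ^ l =
      if k ≤ l ∧ l % 2 = k % 2 then 2 * Real.pi / 2 ^ l * (l.choose ((l - k) / 2) : ℂ)
      else 0 := by
  have hexpand : ∀ x : ℝ, exp (k * x * I) * cos x ^ l =
      (2 ^ l)⁻¹ * ∑ j ∈ range (l + 1),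
        (l.choose j : ℂ) * exp (((2 * j - l + k : ℤ) : ℂ) * x * I) := by
    intro x
    rw [eq_inv_mul_iff_mul_eq₀ (by norm_num), mul_left_comm, mul_comm (2 ^ l : ℂ),
      cos_pow_mul_two_pow, mul_sum]
    refine sum_congr rfl fun j _ => ?_
    rw [mul_left_comm, ← exp_add]
    congr 2
    push_cast
    ring
  have hexp_integrable : ∀ n : ℤ,
      IntervalIntegrable (fun x : ℝ => exp (n * x * I)) MeasureTheory.volume (-Real.pi) Real.pi :=
    fun n => (by fun_prop : Continuous _).intervalIntegrable _ _
  simp_rw [hexpand]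
  rw [intervalIntegral.integral_const_mul, intervalIntegral.integral_finsetSum
    fun j _ => (hexp_integrable _).const_mul _]
  simp_rw [intervalIntegral.integral_const_mul, integral_exp_int_mul_I]
  split_ifs with h
  · rw [sum_eq_single_of_mem ((l - k) / 2) (by simp; omega)]
    · rw [if_pos (by omega)]
      field_simp
    · intro j _ hj
      rw [if_neg (by omega), mul_zero]
  · rw [sum_eq_zero fun j _ => by rw [if_neg (by omega), mul_zero], mul_zero]

theorem integral_cos_mul_cos_pow (k l : ℕ) :
    ∫ x in (-Real.pi)..Real.pi, Real.cos (k * x) * Real.cos x ^ l =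
      if k ≤ l ∧ l % 2 = k % 2 then 2 * Real.pi / 2 ^ l * (l.choose ((l - k) / 2) : ℝ)
      else 0 := by
  have hre : ∀ x : ℝ, Real.cos (k * x) * Real.cos x ^ l = (exp (k * x * I) * cos x ^ l).re := by
    intro x
    rw [← ofReal_cos, ← ofReal_pow, re_mul_ofReal, ← ofReal_natCast, ← ofReal_mul,
      exp_ofReal_mul_I_re]
  simp_rw [hre, ← RCLike.re_to_complex]
  rw [intervalIntegral.intervalIntegral_re ((by fun_prop : Continuous _).intervalIntegrable _ _),
    integral_exp_mul_cos_pow]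
  split_ifs
  · exact_mod_cast ofReal_re _
  · rfl

theorem Nat.choose_mul_descFactorial_sub {n m k : ℕ} (h : m + k ≤ n) :
    n.choose m * (n - m).descFactorial k = (n - k).choose m * n.descFactorial k := by
  have hm : 0 < m.factorial * (n - m - k).factorial := by positivity
  refine Nat.eq_of_mul_eq_mul_right hm ?_
  have h1 := Nat.choose_mul_factorial_mul_factorial (show m ≤ n by omega)
  have h2 := Nat.factorial_mul_descFactorial (show k ≤ n - m by omega)
  have h3 := Nat.choose_mul_factorial_mul_factorial (show m ≤ n - k by omega)
  have h4 := Nat.factorial_mul_descFactorial (show k ≤ n by omega)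
  rw [show n - k - m = n - m - k by omega] at h3
  calc _ = n.choose m * m.factorial * ((n - m - k).factorial * (n - m).descFactorial k) := by
        ring
    _ = n.factorial := by rw [h2, h1]
    _ = (n - k).choose m * m.factorial * (n - m - k).factorial * n.descFactorial k := by
      rw [h3, h4]
    _ = _ := by ring

theorem Nat.cast_descFactorial_eq_prod_range {R : Type*} [CommRing R] {n k : ℕ} (h : k ≤ n) :
    (n.descFactorial k : R) = ∏ i ∈ range k, ((n : R) - i) := by
  rw [Nat.descFactorial_eq_prod_range, Nat.cast_prod]
  exact prod_congr rfl fun i hi => Nat.cast_sub (by simp at hi; omega)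

theorem prod_range_sub_div_add_sub (k m : ℕ) :
    ∏ i ∈ range k, (((k + 2 * m : ℕ) : ℝ) - i) / ((k + 2 * m : ℕ) + k - 2 * i) =
      (k + 2 * m).descFactorial k / (2 ^ k * (k + m).descFactorial k) := by
  have hden : ∀ i ∈ range k,
      ((k + 2 * m : ℕ) : ℝ) + k - 2 * i = 2 * (((k + m : ℕ) : ℝ) - i) := by
    intro i _
    push_cast
    ring
  rw [prod_div_distrib, prod_congr rfl hden, prod_mul_distrib, prod_const, card_range,
    Nat.cast_descFactorial_eq_prod_range (by omega),
    Nat.cast_descFactorial_eq_prod_range (by omega)]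

theorem choose_div_two_pow_eq_mul_prod (k m : ℕ) :
    ((k + 2 * m).choose m : ℝ) / 2 ^ (k + 2 * m) =
      (2 * m).choose m / 2 ^ (2 * m) *
        ∏ i ∈ range k, (((k + 2 * m : ℕ) : ℝ) - i) / ((k + 2 * m : ℕ) + k - 2 * i) := by
  have hchoose : ((k + 2 * m).choose m : ℝ) * (k + m).descFactorial k =
      (2 * m).choose m * (k + 2 * m).descFactorial k := by
    have := Nat.choose_mul_descFactorial_sub (n := k + 2 * m) (m := m) (k := k) (by omega)
    rw [show k + 2 * m - m = k + m by omega, show k + 2 * m - k = 2 * m by omega] at this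
    exact_mod_cast this
  have hd : ((k + m).descFactorial k : ℝ) ≠ 0 := by
    exact_mod_cast (Nat.descFactorial_pos.mpr (by omega)).ne'
  rw [prod_range_sub_div_add_sub, pow_add]
  field_simp
  linear_combination hchoose

theorem stmt_3 (k l : ℕ) :
    ∫ x in (-Real.pi)..Real.pi, Real.cos (k * x) * (Real.cos x) ^ l =
      if k ≤ l ∧ l % 2 = k % 2 then
        (2 * Real.pi / 2 ^ (l - k)) * ((l - k).choose ((l - k) / 2)) *
          ∏ i ∈ Finset.range k, ((l : ℝ) - i) / ((l : ℝ) + k - 2 * i)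
      else 0 := by
  rw [integral_cos_mul_cos_pow]
  split_ifs with h
  · obtain ⟨m, rfl⟩ : ∃ m, l = k + 2 * m := ⟨(l - k) / 2, by omega⟩
    rw [show k + 2 * m - k = 2 * m by omega, show 2 * m / 2 = m by omega]
    linear_combination 2 * Real.pi * choose_div_two_pow_eq_mul_prod k m
  · rfl
end

section
/- Let G⃗ = (V, E⃗) be a weakly connected digraph whose condensation has a unique sink strongly-connected component, and let L_{vw} = c_{vw}|w⟩⟨v| with c_{vw} ≠ 0 for (v,w) ∈ E⃗. Then no two nonzero subspaces S₁, S₂ of ℂ^V that are both invariant under all L_{vw} can be orthogonal; specifically, for any nonzero ψ₁ ∈ S₁, ψ₂ ∈ S₂ and any vertex w in the sink component, some products of the L's map ψ₁ and ψ₂ to nonzero multiples of e_w. -/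
open Matrix Finset

/-!
Each `L_{vw} = c_{vw} |w⟩⟨v|` sends a vector `x` to `(c_{vw} x_v) e_w`. Hence an invariant
subspace containing a vector with `x_v ≠ 0` contains `e_w` for every edge `v → w`, and then
`e_u` for every `u` reachable from `w`. A nonzero invariant subspace therefore contains `e_{w₀}`:
either some nonzero vector has a nonzero coordinate at a vertex `v ≠ w₀`, whose path to `w₀`
starts with an edge, or the vector is a nonzero multiple of `e_{w₀}`. Both subspaces then contain
`e_{w₀}`, which is not orthogonal to itself.
-/

section InvariantSubspace

variable {V K : Type*} [Fintype V] [DecidableEq V] [Field K]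
  {E : V → V → Prop} {c : V → V → K} {S : Submodule K (V → K)}

theorem single_one_mem_of_edge (hc : ∀ v w, E v w → c v w ≠ 0)
    (hinv : ∀ v w, E v w → ∀ x ∈ S, Matrix.single w v (c v w) *ᵥ x ∈ S)
    {x : V → K} (hx : x ∈ S) {v w : V} (hE : E v w) (hxv : x v ≠ 0) :
    Pi.single w 1 ∈ S := by
  have h := hinv v w hE x hx
  rwa [single_mulVec_eq, S.smul_mem_iff (mul_ne_zero (hc v w hE) hxv)] at h

theorem single_one_mem_of_reflTransGen (hc : ∀ v w, E v w → c v w ≠ 0)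
    (hinv : ∀ v w, E v w → ∀ x ∈ S, Matrix.single w v (c v w) *ᵥ x ∈ S)
    {a b : V} (ha : Pi.single a 1 ∈ S) (hab : Relation.ReflTransGen E a b) :
    Pi.single b 1 ∈ S := by
  induction hab with
  | refl => exact ha
  | tail _ hE ih => exact single_one_mem_of_edge hc hinv ih hE (by simp)

theorem single_one_mem_of_ne_bot (hc : ∀ v w, E v w → c v w ≠ 0)
    (hinv : ∀ v w, E v w → ∀ x ∈ S, Matrix.single w v (c v w) *ᵥ x ∈ S)
    {w₀ : V} (hsink : ∀ v, Relation.ReflTransGen E v w₀) (hS : S ≠ ⊥) :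
    Pi.single w₀ 1 ∈ S := by
  obtain ⟨x, hxS, hx0⟩ := Submodule.exists_mem_ne_zero_of_ne_bot hS
  by_cases hoff : ∃ v ≠ w₀, x v ≠ 0
  · obtain ⟨v, hvw₀, hxv⟩ := hoff
    obtain ⟨u, hE, hu⟩ := ((hsink v).cases_head).resolve_left hvw₀
    exact single_one_mem_of_reflTransGen hc hinv (single_one_mem_of_edge hc hinv hxS hE hxv) hu
  · push Not at hoff
    have hx : x = x w₀ • Pi.single w₀ 1 := by
      ext i
      by_cases hi : i = w₀ <;> simp [hi, hoff]
    have hxw₀ : x w₀ ≠ 0 := fun h => hx0 (by rw [hx, h, zero_smul])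
    rwa [hx, S.smul_mem_iff hxw₀] at hxS

end InvariantSubspace

/-- For a digraph whose condensation has a unique sink strongly connected
component (equivalently, there is a vertex `w₀` reachable from every vertex),
with Lindblad operators `L_{vw} = c_{vw}|w⟩⟨v|`, no two nonzero invariant
subspaces `S₁, S₂` of `ℂ^V` can be orthogonal: both contain `e_w` for every
vertex `w` of the sink component, and some vectors of `S₁` and `S₂` have nonzero
inner product. -/
theorem stmt_14 {V : Type} [Fintype V] [DecidableEq V]
    (E : V → V → Prop) (c : V → V → ℂ) (hc : ∀ v w, E v w → c v w ≠ 0)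
    (w₀ : V) (hsink : ∀ v : V, Relation.ReflTransGen (fun a b => E a b) v w₀)
    (S₁ S₂ : Submodule ℂ (V → ℂ))
    (hinv₁ : ∀ v w, E v w → ∀ x ∈ S₁, (Matrix.single w v (c v w)) *ᵥ x ∈ S₁)
    (hinv₂ : ∀ v w, E v w → ∀ x ∈ S₂, (Matrix.single w v (c v w)) *ᵥ x ∈ S₂)
    (hS₁ : S₁ ≠ ⊥) (hS₂ : S₂ ≠ ⊥) :
    (∀ w : V, Relation.ReflTransGen (fun a b => E a b) w₀ w →
        (Pi.single w (1 : ℂ) ∈ S₁ ∧ Pi.single w (1 : ℂ) ∈ S₂))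
    ∧ ∃ x ∈ S₁, ∃ y ∈ S₂, ∑ i : V, star (x i) * y i ≠ 0 := by
  have h₁ := single_one_mem_of_ne_bot hc hinv₁ hsink hS₁
  have h₂ := single_one_mem_of_ne_bot hc hinv₂ hsink hS₂
  refine ⟨fun w hw => ⟨single_one_mem_of_reflTransGen hc hinv₁ h₁ hw,
    single_one_mem_of_reflTransGen hc hinv₂ h₂ hw⟩, _, h₁, _, h₂, ?_⟩
  simp [Pi.single_apply, apply_ite]
end

section
/- Let G⃗ = (V, E⃗) be a digraph with parent sets P(v) = {w : (w,v) ∈ E⃗} and children sets C(v) = {w : (v,w) ∈ E⃗}. Construct the demoralizing graph by splitting each vertex v into copies V̲_v (of size max(indeg v, 1)). Suppose for each v we are given a matrix L_v ∈ ℂ^{V̲_v × P(v)} with pairwise orthogonal columns, and define L̲ by ⟨v̲^k| L̲ |w̲^l⟩ = ⟨v̲^k| L_v |w⟩ when (w,v) ∈ E⃗ and 0 otherwise. Then for any two copies v̲, w̲ belonging to distinct original vertices v ≠ w, we have ⟨v̲| L̲† L̲ |w̲⟩ = 0. -/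
open Matrix Finset

variable {V : Type} [Fintype V] [DecidableEq V]

/-- In-degree of `v` in the digraph with arc relation `E`. -/
def indeg (E : V → V → Prop) [DecidableRel E] (v : V) : ℕ :=
  (Finset.univ.filter (fun w => E w v)).card

/-- Number of copies of `v` in the demoralizing graph: `max(indeg v, 1)`. -/
def copies (E : V → V → Prop) [DecidableRel E] (v : V) : ℕ :=
  max (indeg E v) 1

/-- The nonmoralizing Lindblad operator built from matrices `L v` (rows indexed
by the copies of `v`, columns by vertices): the `(v̲, w̲)` entry is
`⟨v̲|L_v|w⟩` when `(w, v)` is an arc, and `0` otherwise. -/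
def nonmoralLindblad (E : V → V → Prop) [DecidableRel E]
    (L : ∀ v : V, Fin (copies E v) → V → ℂ) :
    Matrix (Σ v : V, Fin (copies E v)) (Σ v : V, Fin (copies E v)) ℂ :=
  fun p q => if E q.1 p.1 then L p.1 p.2 q.1 else 0

set_option linter.unusedSectionVars false in
theorem nonmoralLindblad_conjTranspose_mul_apply (E : V → V → Prop) [DecidableRel E]
    (L : ∀ v : V, Fin (copies E v) → V → ℂ) (p q : Σ v : V, Fin (copies E v)) :
    ((nonmoralLindblad E L)ᴴ * nonmoralLindblad E L) p q =
      ∑ v ∈ univ.filter (fun v => E p.1 v ∧ E q.1 v),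
        ∑ k : Fin (copies E v), star (L v k p.1) * L v k q.1 := by
  simp only [Matrix.mul_apply, conjTranspose_apply, nonmoralLindblad]
  rw [← univ_sigma_univ, sum_sigma, sum_filter]
  refine sum_congr rfl fun v _ => ?_
  by_cases hp : E p.1 v <;> by_cases hq : E q.1 v <;> simp [hp, hq]

/-- If each `L v` has pairwise orthogonal columns on the parents of `v`, then
`L̲†L̲` vanishes between copies of distinct original vertices. -/
theorem stmt_15 (E : V → V → Prop) [DecidableRel E]
    (L : ∀ v : V, Fin (copies E v) → V → ℂ)
    (horth : ∀ v u w : V, E u v → E w v → u ≠ w →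
      ∑ k : Fin (copies E v), star (L v k u) * L v k w = 0)
    (p q : Σ v : V, Fin (copies E v)) (hpq : p.1 ≠ q.1) :
    ((nonmoralLindblad E L)ᴴ * nonmoralLindblad E L) p q = 0 := by
  rw [nonmoralLindblad_conjTranspose_mul_apply]
  refine sum_eq_zero fun v hv => ?_
  obtain ⟨hp, hq⟩ := (mem_filter.mp hv).2
  exact horth v p.1 q.1 hp hq hpq
end
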